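/- Let ℓ, d_Q, d_V be positive integers, M a fixed real ℓ×ℓ mask matrix, and F(q, k, v) = softmax((1/d_Q)·q·kᵀ + M)·v functional attention with row-wise softmax. If ‖q‖_{∞RMS} ≤ 1, ‖k‖_{∞RMS} ≤ 1, and ‖v‖_{∞RMS} ≤ 1, then for every perturbation (Δq, Δk, Δv), ‖∇F(q,k,v)·(Δq, Δk, Δv)‖_{∞RMS} ≤ ‖Δq‖_{∞RMS} + ‖Δk‖_{∞RMS} + ‖Δv‖_{∞RMS}; that is, functional attention with 1/d_Q scaling is 1-Lipschitz (with respect to the sum of the input perturbation norms) when all input norms are at most 1. -/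

import Mathlib

open Matrix

attribute [local instance] Matrix.normedAddCommGroup Matrix.normedSpace

/-- The `∞RMS` norm of `x ∈ ℝ^{ℓ×d}`: the maximum over rows (token positions)
of the RMS norm `sqrt((1/d)·Σ_j x_{ij}²)` of the corresponding row. -/
noncomputable def infRMS {l d : ℕ} (x : Matrix (Fin l) (Fin d) ℝ) : ℝ :=
  ⨆ i : Fin l, Real.sqrt ((1 / (d : ℝ)) * ∑ j, x i j ^ 2)

/-- Row-wise softmax: `softmax(z)_{im} = exp(z_{im}) / Σ_{m'} exp(z_{im'})`. -/
noncomputable def softmaxRows {l m : ℕ} (z : Matrix (Fin l) (Fin m) ℝ) :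
    Matrix (Fin l) (Fin m) ℝ :=
  Matrix.of fun i j => Real.exp (z i j) / ∑ j', Real.exp (z i j')

/-- Functional attention with `1/d_Q` scaling:
`F(q, k, v) = softmax((1/d_Q)·q·kᵀ + M)·v`. -/
noncomputable def attnF {l dQ dV : ℕ} (M : Matrix (Fin l) (Fin l) ℝ)
    (qkv : Matrix (Fin l) (Fin dQ) ℝ × Matrix (Fin l) (Fin dQ) ℝ ×
      Matrix (Fin l) (Fin dV) ℝ) : Matrix (Fin l) (Fin dV) ℝ :=
  softmaxRows ((1 / (dQ : ℝ)) • (qkv.1 * qkv.2.1ᵀ) + M) * qkv.2.2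

/-!
Along the line `τ ↦ (q, k, v) + τ • (Δq, Δk, Δv)` the derivative of `F = A v`, with
`A = softmax S` and `S = q kᵀ / d_Q + M`, is `dA · v + A · Δv`, where row `i` of `dA` is the softmax
Jacobian applied to `dS_i`: `dA_im = A_im (dS_im - Σ_m' A_im' dS_im')`. Each row of `A` is a
probability vector, so `A · Δv` has `∞RMS` norm at most `‖Δv‖`. The `ℓ¹` norm of a row of `dA` is
the mean absolute deviation of `dS_i` under `A_i`, hence at most its standard deviation, hence at
most `max_m |dS_im|`. Because of the `1/d_Q` scaling, Cauchy–Schwarz in RMS form gives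
`|dS_im| ≤ ‖Δq‖ ‖k‖ + ‖q‖ ‖Δk‖ ≤ ‖Δq‖ + ‖Δk‖`, and `‖v‖ ≤ 1` finishes the bound.
-/

noncomputable def rms {d : ℕ} (f : Fin d → ℝ) : ℝ :=
  √((1 / (d : ℝ)) * ∑ j, f j ^ 2)

section rms

variable {d : ℕ}

theorem rms_eq_inv_sqrt_mul_norm (f : Fin d → ℝ) :
    rms f = (√(d : ℝ))⁻¹ * ‖WithLp.toLp 2 f‖ := by
  rw [rms, EuclideanSpace.norm_eq, Real.sqrt_mul (by positivity), one_div, Real.sqrt_inv]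
  simp only [Real.norm_eq_abs, sq_abs]

theorem rms_nonneg (f : Fin d → ℝ) : 0 ≤ rms f := Real.sqrt_nonneg _

theorem rms_add_le (f g : Fin d → ℝ) : rms (f + g) ≤ rms f + rms g := by
  simp only [rms_eq_inv_sqrt_mul_norm, WithLp.toLp_add, ← mul_add]
  exact mul_le_mul_of_nonneg_left (norm_add_le _ _) (by positivity)

theorem rms_sum_smul_le {ι : Type*} [Fintype ι] (a : ι → ℝ) (u : ι → Fin d → ℝ) :
    rms (∑ m, a m • u m) ≤ ∑ m, |a m| * rms (u m) := by
  simp only [rms_eq_inv_sqrt_mul_norm, WithLp.toLp_sum, WithLp.toLp_smul]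
  calc (√(d : ℝ))⁻¹ * ‖∑ m, a m • WithLp.toLp 2 (u m)‖
      ≤ (√(d : ℝ))⁻¹ * ∑ m, |a m| * ‖WithLp.toLp 2 (u m)‖ := by
        refine mul_le_mul_of_nonneg_left ((norm_sum_le _ _).trans_eq ?_) (by positivity)
        simp only [norm_smul, Real.norm_eq_abs]
    _ = ∑ m, |a m| * ((√(d : ℝ))⁻¹ * ‖WithLp.toLp 2 (u m)‖) := by
        rw [Finset.mul_sum]; exact Finset.sum_congr rfl fun m _ => mul_left_comm _ _ _

theorem abs_one_div_mul_dotProduct_le (f g : Fin d → ℝ) :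
    |(1 / (d : ℝ)) * (f ⬝ᵥ g)| ≤ rms f * rms g := by
  have hd : (1 / (d : ℝ)) = (√(d : ℝ))⁻¹ * (√(d : ℝ))⁻¹ := by
    rw [← mul_inv, Real.mul_self_sqrt (Nat.cast_nonneg _), one_div]
  have hinner : f ⬝ᵥ g = inner ℝ (WithLp.toLp 2 f) (WithLp.toLp 2 g) := by
    simp [dotProduct, PiLp.inner_apply, mul_comm]
  rw [hinner, abs_mul, abs_of_nonneg (by positivity), hd, rms_eq_inv_sqrt_mul_norm,
    rms_eq_inv_sqrt_mul_norm, mul_mul_mul_comm]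
  exact mul_le_mul_of_nonneg_left (abs_real_inner_le_norm _ _) (by positivity)

end rms

section infRMS

variable {l d : ℕ}

theorem rms_le_infRMS (x : Matrix (Fin l) (Fin d) ℝ) (i : Fin l) : rms (x i) ≤ infRMS x :=
  le_ciSup (f := fun i => rms (x i)) (Set.finite_range _).bddAbove i

theorem infRMS_nonneg (x : Matrix (Fin l) (Fin d) ℝ) : 0 ≤ infRMS x :=
  Real.iSup_nonneg fun i => rms_nonneg (x i)

theorem infRMS_le {x : Matrix (Fin l) (Fin d) ℝ} {C : ℝ} (hC : 0 ≤ C)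
    (h : ∀ i, rms (x i) ≤ C) : infRMS x ≤ C :=
  Real.iSup_le h hC

theorem infRMS_add_le (x y : Matrix (Fin l) (Fin d) ℝ) : infRMS (x + y) ≤ infRMS x + infRMS y :=
  infRMS_le (add_nonneg (infRMS_nonneg x) (infRMS_nonneg y)) fun i =>
    (rms_add_le (x i) (y i)).trans (add_le_add (rms_le_infRMS x i) (rms_le_infRMS y i))

theorem infRMS_mul_le {n : ℕ} {X : Matrix (Fin l) (Fin n) ℝ} {C : ℝ} (hC : 0 ≤ C)
    (hX : ∀ i, ∑ m, |X i m| ≤ C) (Y : Matrix (Fin n) (Fin d) ℝ) :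
    infRMS (X * Y) ≤ C * infRMS Y := by
  refine infRMS_le (mul_nonneg hC (infRMS_nonneg Y)) fun i => ?_
  calc rms ((X * Y) i) ≤ ∑ m, |X i m| * rms (Y m) := by
        rw [mul_apply_eq_vecMul, vecMul_eq_sum]; exact rms_sum_smul_le _ _
    _ ≤ ∑ m, |X i m| * infRMS Y :=
        Finset.sum_le_sum fun m _ => mul_le_mul_of_nonneg_left (rms_le_infRMS Y m) (abs_nonneg _)
    _ ≤ C * infRMS Y := by
        rw [← Finset.sum_mul]; exact mul_le_mul_of_nonneg_right (hX i) (infRMS_nonneg Y)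

end infRMS

theorem sum_mul_abs_sub_sum_mul_le {ι : Type*} [Fintype ι] {a X : ι → ℝ} {B : ℝ}
    (ha : ∀ m, 0 ≤ a m) (ha1 : ∑ m, a m = 1) (hX : ∀ m, |X m| ≤ B) :
    ∑ m, a m * |X m - ∑ m', a m' * X m'| ≤ B := by
  set μ := ∑ m', a m' * X m'
  obtain ⟨m₀, -, -⟩ := Finset.exists_ne_zero_of_sum_ne_zero (ha1.trans_ne one_ne_zero)
  have hB : 0 ≤ B := (abs_nonneg _).trans (hX m₀)
  have hvar : ∑ m, a m * (X m - μ) ^ 2 = ∑ m, a m * X m ^ 2 - μ ^ 2 := by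
    have hexp : ∀ m, a m * (X m - μ) ^ 2 = a m * X m ^ 2 - 2 * μ * (a m * X m) + μ ^ 2 * a m :=
      fun m => by ring
    simp only [hexp, Finset.sum_add_distrib, Finset.sum_sub_distrib, ← Finset.mul_sum, ha1]
    ring
  have hsq : ∑ m, a m * X m ^ 2 ≤ B ^ 2 := by
    calc ∑ m, a m * X m ^ 2 ≤ ∑ m, a m * B ^ 2 :=
          Finset.sum_le_sum fun m _ =>
            mul_le_mul_of_nonneg_left (sq_le_sq.mpr ((hX m).trans (le_abs_self B))) (ha m)
      _ = B ^ 2 := by rw [← Finset.sum_mul, ha1, one_mul]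
  have hcs : (∑ m, a m * |X m - μ|) ^ 2 ≤ (∑ m, a m) * ∑ m, a m * (X m - μ) ^ 2 :=
    Finset.sum_sq_le_sum_mul_sum_of_sq_le_mul _ (fun m _ => ha m)
      (fun m _ => mul_nonneg (ha m) (sq_nonneg _))
      fun m _ => le_of_eq <| by rw [mul_pow, sq_abs]; ring
  rw [ha1, one_mul, hvar] at hcs
  exact pow_le_pow_iff_left₀ (Finset.sum_nonneg fun m _ => mul_nonneg (ha m) (abs_nonneg _)) hB
    two_ne_zero |>.mp (by nlinarith [sq_nonneg μ])

noncomputable def softmax {ι : Type*} [Fintype ι] (z : ι → ℝ) (m : ι) : ℝ :=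
  Real.exp (z m) / ∑ m', Real.exp (z m')

noncomputable def softmaxDeriv {ι : Type*} [Fintype ι] (z dz : ι → ℝ) (m : ι) : ℝ :=
  softmax z m * (dz m - ∑ m', softmax z m' * dz m')

section softmax

variable {ι : Type*} [Fintype ι]

theorem sum_exp_pos [Nonempty ι] (z : ι → ℝ) : 0 < ∑ m, Real.exp (z m) :=
  Finset.sum_pos (fun _ _ => Real.exp_pos _) Finset.univ_nonempty

theorem softmax_nonneg (z : ι → ℝ) (m : ι) : 0 ≤ softmax z m := by
  unfold softmax; positivity

theorem sum_softmax [Nonempty ι] (z : ι → ℝ) : ∑ m, softmax z m = 1 := by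
  simp only [softmax, ← Finset.sum_div, div_self (sum_exp_pos z).ne']

theorem softmaxRows_apply {l n : ℕ} (z : Matrix (Fin l) (Fin n) ℝ) (i : Fin l) (m : Fin n) :
    softmaxRows z i m = softmax (z i) m :=
  rfl

theorem sum_abs_softmaxDeriv_le [Nonempty ι] {z dz : ι → ℝ} {B : ℝ} (h : ∀ m, |dz m| ≤ B) :
    ∑ m, |softmaxDeriv z dz m| ≤ B := by
  simp only [softmaxDeriv, abs_mul, abs_of_nonneg (softmax_nonneg z _)]
  exact sum_mul_abs_sub_sum_mul_le (softmax_nonneg z) (sum_softmax z) h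

theorem DifferentiableAt.softmax {E : Type*} [NormedAddCommGroup E] [NormedSpace ℝ E]
    {f : E → ι → ℝ} {x : E} (hf : ∀ m, DifferentiableAt ℝ (fun x => f x m) x) (m : ι) :
    DifferentiableAt ℝ (fun x => _root_.softmax (f x) m) x := by
  have : Nonempty ι := ⟨m⟩
  unfold _root_.softmax
  have hsum := (sum_exp_pos (f x)).ne'
  fun_prop (disch := exact hsum)

theorem HasDerivAt.softmax {z : ℝ → ι → ℝ} {dz : ι → ℝ} {τ : ℝ}
    (hz : ∀ m, HasDerivAt (fun τ => z τ m) (dz m) τ) (m : ι) :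
    HasDerivAt (fun τ => _root_.softmax (z τ) m) (softmaxDeriv (z τ) dz m) τ := by
  have : Nonempty ι := ⟨m⟩
  have hD := (sum_exp_pos (z τ)).ne'
  have hexp := fun m => (hz m).exp
  refine ((hexp m).fun_div (HasDerivAt.fun_sum fun m' _ => hexp m') hD).congr_deriv ?_
  simp only [softmaxDeriv, _root_.softmax, ← Finset.sum_div, div_mul_eq_mul_div]
  field_simp

end softmax

section attention

variable {l dQ dV : ℕ}

noncomputable def attnScores (M : Matrix (Fin l) (Fin l) ℝ) (q k : Matrix (Fin l) (Fin dQ) ℝ) :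
    Matrix (Fin l) (Fin l) ℝ :=
  (1 / (dQ : ℝ)) • (q * kᵀ) + M

noncomputable def attnScoresDeriv (q k Δq Δk : Matrix (Fin l) (Fin dQ) ℝ) :
    Matrix (Fin l) (Fin l) ℝ :=
  (1 / (dQ : ℝ)) • (Δq * kᵀ + q * Δkᵀ)

noncomputable def attnFDeriv (M : Matrix (Fin l) (Fin l) ℝ) (q k : Matrix (Fin l) (Fin dQ) ℝ)
    (v : Matrix (Fin l) (Fin dV) ℝ) (Δq Δk : Matrix (Fin l) (Fin dQ) ℝ)
    (Δv : Matrix (Fin l) (Fin dV) ℝ) : Matrix (Fin l) (Fin dV) ℝ :=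
  of (fun i => softmaxDeriv (attnScores M q k i) (attnScoresDeriv q k Δq Δk i)) * v +
    softmaxRows (attnScores M q k) * Δv

theorem attnScores_apply (M : Matrix (Fin l) (Fin l) ℝ) (q k : Matrix (Fin l) (Fin dQ) ℝ)
    (i m : Fin l) : attnScores M q k i m = 1 / (dQ : ℝ) * ∑ t, q i t * k m t + M i m := by
  simp [attnScores, mul_apply]

theorem attnF_apply (M : Matrix (Fin l) (Fin l) ℝ)
    (x : Matrix (Fin l) (Fin dQ) ℝ × Matrix (Fin l) (Fin dQ) ℝ × Matrix (Fin l) (Fin dV) ℝ)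
    (i : Fin l) (j : Fin dV) :
    attnF M x i j = ∑ m, softmax (attnScores M x.1 x.2.1 i) m * x.2.2 m j :=
  rfl

theorem differentiableAt_attnF (M : Matrix (Fin l) (Fin l) ℝ)
    (x : Matrix (Fin l) (Fin dQ) ℝ × Matrix (Fin l) (Fin dQ) ℝ × Matrix (Fin l) (Fin dV) ℝ) :
    DifferentiableAt ℝ (attnF M) x := by
  refine differentiableAt_pi.mpr fun i => differentiableAt_pi.mpr fun j => ?_
  simp only [attnF_apply]
  have hS : ∀ m, DifferentiableAt ℝ (fun y => attnScores M y.1 y.2.1 i m) x := fun m => by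
    simp only [attnScores_apply]
    fun_prop
  have hA := DifferentiableAt.softmax hS
  fun_prop

theorem hasDerivAt_attnScores_line (M : Matrix (Fin l) (Fin l) ℝ)
    (q k Δq Δk : Matrix (Fin l) (Fin dQ) ℝ) (i m : Fin l) :
    HasDerivAt (fun τ : ℝ => attnScores M (q + τ • Δq) (k + τ • Δk) i m)
      (attnScoresDeriv q k Δq Δk i m) 0 := by
  have hprod : ∀ t, HasDerivAt (fun τ : ℝ => (q i t + τ * Δq i t) * (k m t + τ * Δk m t))
      (Δq i t * k m t + q i t * Δk m t) 0 := fun t => by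
    simpa [add_comm, mul_comm] using
      ((hasDerivAt_mul_const (x := 0) (Δq i t)).const_add (q i t)).fun_mul
        ((hasDerivAt_mul_const (x := 0) (Δk m t)).const_add (k m t))
  simp only [attnScores_apply, Matrix.add_apply, Matrix.smul_apply, smul_eq_mul]
  refine (((HasDerivAt.fun_sum fun t _ => hprod t).const_mul _).add_const _).congr_deriv ?_
  simp [attnScoresDeriv, mul_apply, Finset.sum_add_distrib]

theorem hasLineDerivAt_attnF (M : Matrix (Fin l) (Fin l) ℝ) (q k : Matrix (Fin l) (Fin dQ) ℝ)
    (v : Matrix (Fin l) (Fin dV) ℝ) (Δq Δk : Matrix (Fin l) (Fin dQ) ℝ)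
    (Δv : Matrix (Fin l) (Fin dV) ℝ) :
    HasLineDerivAt ℝ (attnF M) (attnFDeriv M q k v Δq Δk Δv) (q, k, v) (Δq, Δk, Δv) := by
  refine hasDerivAt_pi.mpr fun i => hasDerivAt_pi.mpr fun j => ?_
  have hA := HasDerivAt.softmax (hasDerivAt_attnScores_line M q k Δq Δk i)
  have hv : ∀ m, HasDerivAt (fun τ : ℝ => (v + τ • Δv) m j) (Δv m j) 0 := fun m => by
    simpa using (hasDerivAt_mul_const (x := 0) (Δv m j)).const_add (v m j)
  simp only [Prod.smul_mk, Prod.mk_add_mk, attnF_apply]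
  refine (HasDerivAt.fun_sum fun m _ => (hA m).fun_mul (hv m)).congr_deriv ?_
  simp [attnFDeriv, mul_apply, Finset.sum_add_distrib, softmaxRows_apply]

theorem fderiv_attnF_apply (M : Matrix (Fin l) (Fin l) ℝ) (q k : Matrix (Fin l) (Fin dQ) ℝ)
    (v : Matrix (Fin l) (Fin dV) ℝ) (Δq Δk : Matrix (Fin l) (Fin dQ) ℝ)
    (Δv : Matrix (Fin l) (Fin dV) ℝ) :
    fderiv ℝ (attnF M) (q, k, v) (Δq, Δk, Δv) = attnFDeriv M q k v Δq Δk Δv :=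
  ((differentiableAt_attnF M _).hasFDerivAt.hasLineDerivAt _).unique
    (hasLineDerivAt_attnF M q k v Δq Δk Δv)

theorem abs_attnScoresDeriv_le {q k : Matrix (Fin l) (Fin dQ) ℝ} (hq : infRMS q ≤ 1)
    (hk : infRMS k ≤ 1) (Δq Δk : Matrix (Fin l) (Fin dQ) ℝ) (i m : Fin l) :
    |attnScoresDeriv q k Δq Δk i m| ≤ infRMS Δq + infRMS Δk := by
  have hsplit : attnScoresDeriv q k Δq Δk i m =
      1 / (dQ : ℝ) * (Δq i ⬝ᵥ k m) + 1 / (dQ : ℝ) * (q i ⬝ᵥ Δk m) := by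
    simp [attnScoresDeriv, mul_apply, dotProduct, mul_add]
  rw [hsplit]
  calc _ ≤ rms (Δq i) * rms (k m) + rms (q i) * rms (Δk m) :=
        (abs_add_le _ _).trans (add_le_add (abs_one_div_mul_dotProduct_le _ _)
          (abs_one_div_mul_dotProduct_le _ _))
    _ ≤ infRMS Δq * 1 + 1 * infRMS Δk :=
        add_le_add
          (mul_le_mul (rms_le_infRMS Δq i) ((rms_le_infRMS k m).trans hk) (rms_nonneg _)
            (infRMS_nonneg Δq))
          (mul_le_mul ((rms_le_infRMS q i).trans hq) (rms_le_infRMS Δk m) (rms_nonneg _)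
            zero_le_one)
    _ = infRMS Δq + infRMS Δk := by ring

theorem infRMS_attnFDeriv_le (M : Matrix (Fin l) (Fin l) ℝ) {q k : Matrix (Fin l) (Fin dQ) ℝ}
    (hq : infRMS q ≤ 1) (hk : infRMS k ≤ 1) (v : Matrix (Fin l) (Fin dV) ℝ)
    (Δq Δk : Matrix (Fin l) (Fin dQ) ℝ) (Δv : Matrix (Fin l) (Fin dV) ℝ) :
    infRMS (attnFDeriv M q k v Δq Δk Δv) ≤ (infRMS Δq + infRMS Δk) * infRMS v + infRMS Δv := by
  have hdA : ∀ i, ∑ m, |softmaxDeriv (attnScores M q k i) (attnScoresDeriv q k Δq Δk i) m| ≤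
      infRMS Δq + infRMS Δk := fun i =>
    have : Nonempty (Fin l) := ⟨i⟩
    sum_abs_softmaxDeriv_le (abs_attnScoresDeriv_le hq hk Δq Δk i)
  have hA : ∀ i, ∑ m, |softmaxRows (attnScores M q k) i m| ≤ 1 := fun i => by
    have : Nonempty (Fin l) := ⟨i⟩
    simp only [softmaxRows_apply, abs_of_nonneg (softmax_nonneg _ _), sum_softmax, le_refl]
  calc _ ≤ _ := infRMS_add_le _ _
    _ ≤ (infRMS Δq + infRMS Δk) * infRMS v + 1 * infRMS Δv :=
        add_le_add (infRMS_mul_le (add_nonneg (infRMS_nonneg _) (infRMS_nonneg _)) hdA v)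
          (infRMS_mul_le zero_le_one hA Δv)
    _ = _ := by rw [one_mul]

end attention

theorem functional_attention_one_lipschitz_general
    (l dQ dV : ℕ)
    (M : Matrix (Fin l) (Fin l) ℝ)
    (q k : Matrix (Fin l) (Fin dQ) ℝ) (v : Matrix (Fin l) (Fin dV) ℝ)
    (hq : infRMS q ≤ 1) (hk : infRMS k ≤ 1) (hv : infRMS v ≤ 1) :
    ∀ (Δq Δk : Matrix (Fin l) (Fin dQ) ℝ) (Δv : Matrix (Fin l) (Fin dV) ℝ),
      infRMS (fderiv ℝ (attnF M) (q, k, v) (Δq, Δk, Δv)) ≤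
        infRMS Δq + infRMS Δk + infRMS Δv := by
  intro Δq Δk Δv
  rw [fderiv_attnF_apply]
  calc _ ≤ (infRMS Δq + infRMS Δk) * infRMS v + infRMS Δv :=
        infRMS_attnFDeriv_le M hq hk v Δq Δk Δv
    _ ≤ (infRMS Δq + infRMS Δk) * 1 + infRMS Δv := by
        gcongr
        exact add_nonneg (infRMS_nonneg _) (infRMS_nonneg _)
    _ = infRMS Δq + infRMS Δk + infRMS Δv := by ring

/-- If `‖q‖_{∞RMS} ≤ 1`, `‖k‖_{∞RMS} ≤ 1`, `‖v‖_{∞RMS} ≤ 1`,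
then the Fréchet derivative of functional attention
`F(q,k,v) = softmax((1/d_Q)·q·kᵀ + M)·v` at `(q, k, v)` satisfies
`‖∇F(q,k,v)·(Δq,Δk,Δv)‖_{∞RMS} ≤ ‖Δq‖_{∞RMS} + ‖Δk‖_{∞RMS} + ‖Δv‖_{∞RMS}` for
every perturbation: functional attention with `1/d_Q` scaling is 1-Lipschitz
(w.r.t. the sum of the input perturbation norms) when all input norms are at
most 1. -/
theorem functional_attention_one_lipschitz
    (l dQ dV : ℕ) (hl : 0 < l) (hdQ : 0 < dQ) (hdV : 0 < dV)
    (M : Matrix (Fin l) (Fin l) ℝ)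
    (q k : Matrix (Fin l) (Fin dQ) ℝ) (v : Matrix (Fin l) (Fin dV) ℝ)
    (hq : infRMS q ≤ 1) (hk : infRMS k ≤ 1) (hv : infRMS v ≤ 1) :
    ∀ (Δq Δk : Matrix (Fin l) (Fin dQ) ℝ) (Δv : Matrix (Fin l) (Fin dV) ℝ),
      infRMS (fderiv ℝ (attnF M) (q, k, v) (Δq, Δk, Δv)) ≤
        infRMS Δq + infRMS Δk + infRMS Δv :=
  functional_attention_one_lipschitz_general l dQ dV M q k v hq hk hv
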